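/- arXiv:1902.06290 — 4 statements merged into one kernel-verified Lean document; each statement's English description precedes it below -/
import Mathlib

section
/- Let ξ = (ξ₁, ξ₂) be a random vector with nonnegative components whose moment generating function is finite at some point (λ, μ) with λ > 0, μ > 0; i.e., B := E[exp(λ ξ₁ + μ ξ₂)] < ∞. Then for every ε > max(λ⁻¹, μ⁻¹), the integral ∫₀^∞∫₀^∞ exp(−ε G(x,y)) dx dy is finite, where G(x,y) = −ln P(ξ₁ ≥ x, ξ₂ ≥ y) (assuming the tail probability is strictly positive for all x,y ≥ 0). -/
/-!
By the exponential Chebyshev inequality, P(ξ₁ ≥ x, ξ₂ ≥ y) ≤ B e^{-(λx + μy)}, so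
exp(-ε G(x,y)) = P(ξ₁ ≥ x, ξ₂ ≥ y)^ε ≤ B^ε e^{-ελx} e^{-εμy} on the quadrant, and the right-hand
side is integrable over the quadrant for every ε > 0.
-/

open Real MeasureTheory ProbabilityTheory

section JointTail

variable {Ω : Type*} [MeasurableSpace Ω] (P : Measure Ω) (ξ₁ ξ₂ : Ω → ℝ)

theorem measurable_measure_jointTail (h₁ : Measurable ξ₁) (h₂ : Measurable ξ₂) [SFinite P] :
    Measurable fun p : ℝ × ℝ => P {ω | p.1 ≤ ξ₁ ω ∧ p.2 ≤ ξ₂ ω} :=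
  measurable_measure_prodMk_left (ν := P) <|
    (measurableSet_le measurable_fst.fst (h₁.comp measurable_snd)).inter
      (measurableSet_le measurable_fst.snd (h₂.comp measurable_snd))

theorem measureReal_jointTail_le [IsFiniteMeasure P] {lam mu : ℝ} (hlam : 0 ≤ lam) (hmu : 0 ≤ mu)
    (hB : Integrable (fun ω => exp (lam * ξ₁ ω + mu * ξ₂ ω)) P) (x y : ℝ) :
    P.real {ω | x ≤ ξ₁ ω ∧ y ≤ ξ₂ ω} ≤
      exp (-(lam * x + mu * y)) * ∫ ω, exp (lam * ξ₁ ω + mu * ξ₂ ω) ∂P := by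
  have hsub : {ω | x ≤ ξ₁ ω ∧ y ≤ ξ₂ ω} ⊆ {ω | lam * x + mu * y ≤ lam * ξ₁ ω + mu * ξ₂ ω} :=
    fun ω hω => add_le_add (mul_le_mul_of_nonneg_left hω.1 hlam)
      (mul_le_mul_of_nonneg_left hω.2 hmu)
  calc P.real {ω | x ≤ ξ₁ ω ∧ y ≤ ξ₂ ω}
      ≤ P.real {ω | lam * x + mu * y ≤ lam * ξ₁ ω + mu * ξ₂ ω} := measureReal_mono hsub
    _ ≤ exp (-1 * (lam * x + mu * y)) * mgf (fun ω => lam * ξ₁ ω + mu * ξ₂ ω) P 1 :=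
        measure_ge_le_exp_mul_mgf _ zero_le_one (by simpa using hB)
    _ = _ := by simp [mgf]

end JointTail

theorem integrableOn_exp_neg_mul_Ici_prod {a b : ℝ} (ha : 0 < a) (hb : 0 < b) :
    IntegrableOn (fun p : ℝ × ℝ => exp (-a * p.1) * exp (-b * p.2))
      (Set.Ici 0 ×ˢ Set.Ici 0) := by
  rw [IntegrableOn, Measure.volume_eq_prod, ← Measure.prod_restrict]
  have hexp {c : ℝ} (hc : 0 < c) : IntegrableOn (fun x : ℝ => exp (-c * x)) (Set.Ici 0) :=
    Iff.mpr integrableOn_Ici_iff_integrableOn_Ioi (exp_neg_integrableOn_Ioi 0 hc)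
  exact (hexp ha).mul_prod (hexp hb)

theorem exp_mul_neg_log_le_of_le_mul_exp {q B a ε : ℝ} (hq : 0 < q) (hε : 0 ≤ ε)
    (h : q ≤ exp (-a) * B) : exp (-ε * -log q) ≤ B ^ ε * exp (-(ε * a)) := by
  have hB : 0 ≤ B := nonneg_of_mul_nonneg_right (hq.le.trans h) (exp_pos _)
  calc exp (-ε * -log q) = q ^ ε := by rw [rpow_def_of_pos hq]; ring_nf
    _ ≤ (exp (-a) * B) ^ ε := rpow_le_rpow hq.le h hε
    _ = B ^ ε * exp (-(ε * a)) := by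
        rw [mul_rpow (exp_pos _).le hB, ← exp_mul, mul_comm]; ring_nf

theorem stmt7_general {Ω : Type*} [MeasurableSpace Ω]
    (P : Measure Ω) [IsProbabilityMeasure P]
    (ξ₁ ξ₂ : Ω → ℝ) (h₁ : Measurable ξ₁) (h₂ : Measurable ξ₂)
    (lam mu : ℝ) (hlam : 0 < lam) (hmu : 0 < mu)
    (hB : Integrable (fun ω => Real.exp (lam * ξ₁ ω + mu * ξ₂ ω)) P)
    (htail : ∀ x y : ℝ, 0 ≤ x → 0 ≤ y → 0 < P {ω | x ≤ ξ₁ ω ∧ y ≤ ξ₂ ω}) :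
    ∀ ε : ℝ, max lam⁻¹ mu⁻¹ < ε →
      IntegrableOn
        (fun p : ℝ × ℝ => Real.exp (-ε *
          (-(Real.log ((P {ω | p.1 ≤ ξ₁ ω ∧ p.2 ≤ ξ₂ ω}).toReal)))))
        (Set.Ici (0 : ℝ) ×ˢ Set.Ici (0 : ℝ)) := by
  intro ε hε
  have hε₀ : 0 < ε := (inv_pos.mpr hlam).trans_le (le_max_left _ _) |>.trans hε
  set B := ∫ ω, exp (lam * ξ₁ ω + mu * ξ₂ ω) ∂P
  refine ((integrableOn_exp_neg_mul_Ici_prod (mul_pos hε₀ hlam) (mul_pos hε₀ hmu)).const_mul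
    (B ^ ε)).mono' ?_ ?_
  · exact ((measurable_measure_jointTail P ξ₁ ξ₂ h₁ h₂).ennreal_toReal.log.neg.const_mul
      (-ε)).exp.aestronglyMeasurable
  refine (ae_restrict_iff' (measurableSet_Ici.prod measurableSet_Ici)).mpr (ae_of_all _ ?_)
  rintro ⟨x, y⟩ ⟨hx, hy⟩
  have hpos : 0 < P.real {ω | x ≤ ξ₁ ω ∧ y ≤ ξ₂ ω} :=
    ENNReal.toReal_pos (htail x y hx hy).ne' (measure_ne_top _ _)
  rw [norm_of_nonneg (exp_pos _).le, ← exp_add]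
  refine (exp_mul_neg_log_le_of_le_mul_exp hpos hε₀.le
    (measureReal_jointTail_le P ξ₁ ξ₂ hlam.le hmu.le hB x y)).trans_eq ?_
  congr 2
  ring

/-- If ξ = (ξ₁,ξ₂) has nonnegative components, its MGF is finite at
some (λ,μ) with λ,μ > 0, and the tail P(ξ₁ ≥ x, ξ₂ ≥ y) is strictly positive,
then for every ε > max(λ⁻¹, μ⁻¹) the integral
∫₀^∞∫₀^∞ exp(−ε G(x,y)) dx dy is finite, where G(x,y) = −ln P(ξ₁ ≥ x, ξ₂ ≥ y). -/
theorem stmt7 {Ω : Type*} [MeasurableSpace Ω]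
    (P : Measure Ω) [IsProbabilityMeasure P]
    (ξ₁ ξ₂ : Ω → ℝ) (h₁ : Measurable ξ₁) (h₂ : Measurable ξ₂)
    (hnn : ∀ ω, 0 ≤ ξ₁ ω ∧ 0 ≤ ξ₂ ω)
    (lam mu : ℝ) (hlam : 0 < lam) (hmu : 0 < mu)
    (hB : Integrable (fun ω => Real.exp (lam * ξ₁ ω + mu * ξ₂ ω)) P)
    (htail : ∀ x y : ℝ, 0 ≤ x → 0 ≤ y → 0 < P {ω | x ≤ ξ₁ ω ∧ y ≤ ξ₂ ω}) :
    ∀ ε : ℝ, max lam⁻¹ mu⁻¹ < ε →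
      IntegrableOn
        (fun p : ℝ × ℝ => Real.exp (-ε *
          (-(Real.log ((P {ω | p.1 ≤ ξ₁ ω ∧ p.2 ≤ ξ₂ ω}).toReal)))))
        (Set.Ici (0 : ℝ) ×ˢ Set.Ici (0 : ℝ)) :=
  stmt7_general P ξ₁ ξ₂ h₁ h₂ lam mu hlam hmu hB htail
end

section
/- Let m > 1 and m' = m/(m−1). The one-dimensional Laplace integral I_m(λ) = ∫₀^∞ exp(λx − x^m/m) dx satisfies, for all sufficiently large λ, the upper bound I_m(λ) ≤ m^{2/m − 1} · e^{1/m} · Γ(1/m) · λ^{1/(m−1)} · exp(λ^{m'}/m'). -/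
/-!
Young's inequality for the pair `λ(1-ε)^{-1/m}`, `x(1-ε)^{1/m}` bounds the integrand by
`exp((1-ε)^{1-m'} λ^{m'}/m') · exp(-ε x^m/m)`, and the second factor integrates to
`(ε/m)^{-1/m} Γ(1/m + 1)`. Taking `ε = 1/(m λ^{m'})`, which tends to `0`, the first-order bound
`(1-ε)^{1-m'} ≤ 1 + m'ε` costs at most the factor `e^{ε λ^{m'}} = e^{1/m}`, and
`(ε/m)^{-1/m} = m^{2/m} λ^{1/(m-1)}`.
-/

open Real MeasureTheory Filter Topology Set

lemma eventually_one_sub_rpow_neg_le {p c : ℝ} (hpc : p < c) :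
    ∀ᶠ ε in 𝓝[>] 0, (1 - ε) ^ (-p) ≤ 1 + c * ε := by
  have hderiv : HasDerivAt (fun ε : ℝ ↦ (1 - ε) ^ (-p)) p 0 := by
    simpa using ((hasDerivAt_id (0 : ℝ)).const_sub 1).rpow_const (p := -p) (by norm_num)
  filter_upwards [hderiv.hasDerivWithinAt.limsup_slope_le' (s := Ioi 0) self_notMem_Ioi hpc,
    self_mem_nhdsWithin] with ε hslope (hε : 0 < ε)
  rw [slope_def_field, sub_zero, sub_zero, one_rpow, div_lt_iff₀ hε] at hslope
  linarith

lemma mul_sub_rpow_div_le {m q lam x ε : ℝ} (hmq : m.HolderConjugate q) (hlam : 0 ≤ lam)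
    (hx : 0 ≤ x) (hε : ε < 1) :
    lam * x - x ^ m / m ≤ lam ^ q * (1 - ε) ^ (-(q - 1)) / q - ε * x ^ m / m := by
  have hε' : 0 < 1 - ε := by linarith
  have hyoung := young_inequality_of_nonneg (mul_nonneg hlam (rpow_nonneg hε'.le (-(1 / m))))
    (mul_nonneg hx (rpow_nonneg hε'.le (1 / m))) hmq.symm
  rw [mul_mul_mul_comm, ← rpow_add hε', neg_add_cancel, rpow_zero, mul_one,
    mul_rpow hlam (rpow_nonneg hε'.le _), mul_rpow hx (rpow_nonneg hε'.le _),
    ← rpow_mul hε'.le, ← rpow_mul hε'.le, one_div_mul_cancel hmq.ne_zero, rpow_one,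
    neg_mul, one_div_mul_eq_div, hmq.symm.div_conj_eq_sub_one] at hyoung
  linarith [show x ^ m * (1 - ε) / m = x ^ m / m - ε * x ^ m / m by ring]

lemma setIntegral_Ici_exp_le {f : ℝ → ℝ} {m b C : ℝ} (hf : Measurable f) (hm : 0 < m)
    (hb : 0 < b) (hfC : ∀ x, 0 ≤ x → f x ≤ C - b * x ^ m) :
    ∫ x in Ici 0, exp (f x) ≤ exp C * (b ^ (-1 / m) * Gamma (1 / m + 1)) := by
  have hbound : ∀ x ∈ Ioi (0 : ℝ), exp (f x) ≤ exp C * exp (-b * x ^ m) := fun x hx ↦ by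
    rw [← exp_add, exp_le_exp]
    linarith [hfC x (le_of_lt hx)]
  have hg : IntegrableOn (fun x : ℝ ↦ exp C * exp (-b * x ^ m)) (Ioi 0) := by
    have := integrableOn_rpow_mul_exp_neg_mul_rpow (s := 0) (by norm_num) hm hb
    simp only [rpow_zero, one_mul] at this
    exact this.const_mul _
  have hfint : IntegrableOn (fun x ↦ exp (f x)) (Ioi 0) := by
    refine hg.mono' hf.exp.aestronglyMeasurable ?_
    filter_upwards [ae_restrict_mem measurableSet_Ioi] with x hx
    rw [norm_of_nonneg (exp_pos _).le]
    exact hbound x hx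
  calc ∫ x in Ici 0, exp (f x) = ∫ x in Ioi 0, exp (f x) := integral_Ici_eq_integral_Ioi
    _ ≤ ∫ x in Ioi 0, exp C * exp (-b * x ^ m) :=
        setIntegral_mono_on hfint hg measurableSet_Ioi hbound
    _ = exp C * (b ^ (-1 / m) * Gamma (1 / m + 1)) := by
        rw [integral_const_mul, integral_exp_neg_mul_rpow hm hb]

lemma integral_exp_mul_sub_rpow_div_le {m q lam ε : ℝ} (hmq : m.HolderConjugate q)
    (hlam : 0 ≤ lam) (hε₀ : 0 < ε) (hε₁ : ε < 1) :
    ∫ x in Ici 0, exp (lam * x - x ^ m / m) ≤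
      exp (lam ^ q * (1 - ε) ^ (-(q - 1)) / q) * ((ε / m) ^ (-1 / m) * Gamma (1 / m + 1)) :=
  setIntegral_Ici_exp_le (by fun_prop) hmq.pos (div_pos hε₀ hmq.pos) fun x hx ↦ by
    linarith [mul_sub_rpow_div_le hmq hlam hx hε₁, mul_div_right_comm ε (x ^ m) m]

/-- upper bound for I_m(λ) = ∫₀^∞ exp(λx − x^m/m) dx: for all
sufficiently large λ,
I_m(λ) ≤ m^{2/m − 1} e^{1/m} Γ(1/m) λ^{1/(m−1)} exp(λ^{m'}/m'). -/
theorem stmt10 (m : ℝ) (hm : 1 < m) :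
    ∃ lam₀ : ℝ, ∀ lam : ℝ, lam₀ ≤ lam →
      (∫ x in Set.Ici (0 : ℝ), Real.exp (lam * x - x ^ m / m))
        ≤ m ^ (2 / m - 1) * Real.exp (1 / m) * Real.Gamma (1 / m) *
          lam ^ (1 / (m - 1)) * Real.exp (lam ^ (m / (m - 1)) / (m / (m - 1))) := by
  set q := m / (m - 1)
  have hmq : m.HolderConjugate q := (holderConjugate_iff_eq_conjExponent hm).2 rfl
  have hm₀ : 0 < m := hmq.pos
  have hε_lim : Tendsto (fun lam : ℝ ↦ (m * lam ^ q)⁻¹) atTop (𝓝[>] 0) :=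
    tendsto_inv_atTop_nhdsGT_zero.comp
      ((tendsto_rpow_atTop hmq.symm.pos).const_mul_atTop hm₀)
  obtain ⟨lam₀, hlam₀⟩ := eventually_atTop.1 <| (eventually_gt_atTop 0).and <|
    hε_lim.eventually <| (eventually_one_sub_rpow_neg_le (sub_one_lt q)).and <|
      (eventually_lt_nhds one_pos).filter_mono nhdsWithin_le_nhds
  refine ⟨lam₀, fun lam hlam => ?_⟩
  obtain ⟨hlam, hε_dev, hε₁⟩ := hlam₀ lam hlam
  set ε := (m * lam ^ q)⁻¹ with hε_def
  have hε₀ : 0 < ε := by positivity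
  have hεlam : ε * lam ^ q = 1 / m := by rw [hε_def]; field_simp
  have hscale : (ε / m) ^ (-1 / m) = m ^ (2 / m) * lam ^ (1 / (m - 1)) := by
    have hq : q * (1 / m) = 1 / (m - 1) := by
      field_simp [hmq.sub_one_ne_zero]
      linarith [hmq.sub_one_mul_conj]
    have hεm : ε / m = (m ^ 2 * lam ^ q)⁻¹ := by rw [hε_def]; field_simp
    rw [hεm, inv_rpow (by positivity), ← rpow_neg (by positivity), neg_div, neg_neg,
      mul_rpow (by positivity) (by positivity), ← rpow_natCast, ← rpow_mul hm₀.le,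
      ← rpow_mul hlam.le, hq, Nat.cast_ofNat, mul_one_div]
  calc ∫ x in Ici 0, exp (lam * x - x ^ m / m)
      ≤ exp (lam ^ q * (1 - ε) ^ (-(q - 1)) / q) * ((ε / m) ^ (-1 / m) * Gamma (1 / m + 1)) :=
        integral_exp_mul_sub_rpow_div_le hmq hlam.le hε₀ hε₁
    _ ≤ exp (lam ^ q / q + 1 / m) * ((ε / m) ^ (-1 / m) * Gamma (1 / m + 1)) := by
        gcongr
        calc lam ^ q * (1 - ε) ^ (-(q - 1)) / q ≤ lam ^ q * (1 + q * ε) / q := by gcongr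
          _ = lam ^ q / q + 1 / m := by rw [← hεlam]; field_simp [hmq.symm.ne_zero]
    _ = _ := by
        rw [exp_add, hscale, Gamma_add_one (one_div_pos.2 hm₀).ne', rpow_sub hm₀, rpow_one]
        ring
end

section
/- Let m > 1 and m' = m/(m−1). Then lim_{λ→∞} ln I_m(λ) / (λ^{m'}/m') = 1, where I_m(λ) = ∫₀^∞ exp(λx − x^m/m) dx. -/
open Real MeasureTheory Filter Topology

/-!
Let `q = m / (m - 1)` be the exponent conjugate to `m`. Young's inequality
`(λ + 1) x ≤ (λ + 1) ^ q / q + x ^ m / m` bounds the integrand by `exp ((λ + 1) ^ q / q) * exp (-x)`,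
so `log I_m(λ) ≤ (λ + 1) ^ q / q`. Conversely, the exponent `λ x - x ^ m / m` attains its maximum
`λ ^ q / q` at `x = λ ^ (q - 1)` and stays above `λ ^ q / q - λ` on the unit interval to the left
of that point, so `log I_m(λ) ≥ λ ^ q / q - λ`. Both bounds are `λ ^ q / q · (1 + o(1))`.
-/

noncomputable def laplaceIntegral (p lam : ℝ) : ℝ :=
  ∫ x in Set.Ici (0 : ℝ), exp (lam * x - x ^ p / p)

theorem continuous_exp_mul_sub_rpow_div {p : ℝ} (hp : 0 ≤ p) (lam : ℝ) :
    Continuous fun x : ℝ => exp (lam * x - x ^ p / p) :=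
  ((continuous_const.mul continuous_id).sub
    ((continuous_id.rpow_const fun _ => Or.inr hp).div_const p)).rexp

theorem integrableOn_exp_neg_Ici : IntegrableOn (fun x : ℝ => exp (-x)) (Set.Ici 0) :=
  (integrableOn_Ici_iff_integrableOn_Ioi).2 <| by
    simpa only [neg_mul, one_mul] using exp_neg_integrableOn_Ioi (0 : ℝ) one_pos

theorem integral_exp_neg_Ici_zero : ∫ x in Set.Ici (0 : ℝ), exp (-x) = 1 := by
  rw [setIntegral_congr_set Ioi_ae_eq_Ici.symm, integral_exp_neg_Ioi_zero]

namespace Real.HolderConjugate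

variable {p q : ℝ}

theorem mul_sub_rpow_div_le (hpq : p.HolderConjugate q) {lam x : ℝ} (hlam : 0 ≤ lam)
    (hx : 0 ≤ x) : lam * x - x ^ p / p ≤ (lam + 1) ^ q / q - x := by
  have := young_inequality_of_nonneg (by linarith) hx hpq.symm (a := lam + 1)
  linarith

theorem exp_mul_sub_rpow_div_le (hpq : p.HolderConjugate q) {lam x : ℝ} (hlam : 0 ≤ lam)
    (hx : 0 ≤ x) : exp (lam * x - x ^ p / p) ≤ exp ((lam + 1) ^ q / q) * exp (-x) := by
  rw [← exp_add, exp_le_exp]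
  linarith [hpq.mul_sub_rpow_div_le hlam hx]

theorem integrableOn_exp_mul_sub_rpow_div (hpq : p.HolderConjugate q) {lam : ℝ}
    (hlam : 0 ≤ lam) :
    IntegrableOn (fun x : ℝ => exp (lam * x - x ^ p / p)) (Set.Ici 0) := by
  refine Integrable.mono' (integrableOn_exp_neg_Ici.const_mul (exp ((lam + 1) ^ q / q)))
    (continuous_exp_mul_sub_rpow_div hpq.nonneg lam).aestronglyMeasurable.restrict ?_
  refine ae_restrict_of_forall_mem measurableSet_Ici fun x hx => ?_
  rw [norm_of_nonneg (exp_nonneg _)]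
  exact hpq.exp_mul_sub_rpow_div_le hlam hx

theorem laplaceIntegral_le (hpq : p.HolderConjugate q) {lam : ℝ} (hlam : 0 ≤ lam) :
    laplaceIntegral p lam ≤ exp ((lam + 1) ^ q / q) := calc
  laplaceIntegral p lam ≤ ∫ x in Set.Ici (0 : ℝ), exp ((lam + 1) ^ q / q) * exp (-x) :=
    setIntegral_mono_on (hpq.integrableOn_exp_mul_sub_rpow_div hlam)
      (integrableOn_exp_neg_Ici.const_mul _) measurableSet_Ici
      fun _ hx => hpq.exp_mul_sub_rpow_div_le hlam hx
  _ = exp ((lam + 1) ^ q / q) := by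
    rw [integral_const_mul, integral_exp_neg_Ici_zero, mul_one]

/-- The maximiser of `x ↦ λ x - x ^ p / p` is `s = λ ^ (q - 1)`, where `λ s = s ^ p = λ ^ q`. -/
theorem sub_le_mul_sub_rpow_div (hpq : p.HolderConjugate q) {lam x : ℝ} (hlam : 0 ≤ lam)
    (hx₀ : 0 ≤ x) (hx : x ∈ Set.Icc (lam ^ (q - 1) - 1) (lam ^ (q - 1))) :
    lam ^ q / q - lam ≤ lam * x - x ^ p / p := by
  have hxp : x ^ p ≤ lam ^ q := calc
    x ^ p ≤ (lam ^ (q - 1)) ^ p := rpow_le_rpow hx₀ hx.2 hpq.nonneg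
    _ = lam ^ q := by rw [← rpow_mul hlam, hpq.symm.sub_one_mul_conj]
  have hlam_mul : lam * lam ^ (q - 1) = lam ^ q := by
    rw [mul_comm, ← rpow_add_one' hlam (by linarith [hpq.symm.lt]), sub_add_cancel]
  have hdiv : x ^ p / p ≤ lam ^ q / p := div_le_div_of_nonneg_right hxp hpq.nonneg
  have hconj : lam ^ q / q = lam ^ q - lam ^ q / p := by
    rw [div_eq_mul_inv, div_eq_mul_inv, ← hpq.one_sub_inv]; ring
  nlinarith [hx.1]

theorem exp_sub_le_laplaceIntegral (hpq : p.HolderConjugate q) {lam : ℝ} (hlam : 1 ≤ lam) :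
    exp (lam ^ q / q - lam) ≤ laplaceIntegral p lam := by
  set s := lam ^ (q - 1)
  have hs : 1 ≤ s := one_le_rpow hlam (by linarith [hpq.symm.lt])
  have hsub : Set.Icc (s - 1) s ⊆ Set.Ici 0 := fun x hx => by
    simp only [Set.mem_Ici]; linarith [hx.1]
  have hint := hpq.integrableOn_exp_mul_sub_rpow_div (zero_le_one.trans hlam)
  calc exp (lam ^ q / q - lam)
      = exp (lam ^ q / q - lam) * volume.real (Set.Icc (s - 1) s) := by
        simp [measureReal_def, Real.volume_Icc]
    _ ≤ ∫ x in Set.Icc (s - 1) s, exp (lam * x - x ^ p / p) :=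
        setIntegral_ge_of_const_le_real measurableSet_Icc (by simp [Real.volume_Icc])
          (fun x hx => exp_le_exp.2 <|
            hpq.sub_le_mul_sub_rpow_div (zero_le_one.trans hlam) (hsub hx) hx)
          (hint.mono_set hsub)
    _ ≤ laplaceIntegral p lam :=
        setIntegral_mono_set hint (.of_forall fun _ => (exp_pos _).le) hsub.eventuallyLE

theorem log_laplaceIntegral_mem_Icc (hpq : p.HolderConjugate q) {lam : ℝ} (hlam : 1 ≤ lam) :
    log (laplaceIntegral p lam) ∈ Set.Icc (lam ^ q / q - lam) ((lam + 1) ^ q / q) := by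
  have hlower := hpq.exp_sub_le_laplaceIntegral hlam
  have hpos := (exp_pos _).trans_le hlower
  exact ⟨(le_log_iff_exp_le hpos).2 hlower,
    (log_le_iff_le_exp hpos).2 (hpq.laplaceIntegral_le (by linarith))⟩

end Real.HolderConjugate

theorem tendsto_add_one_rpow_div_rpow_atTop (q : ℝ) :
    Tendsto (fun lam : ℝ => (lam + 1) ^ q / lam ^ q) atTop (𝓝 1) := by
  have h : Tendsto (fun lam : ℝ => (1 + lam⁻¹) ^ q) atTop (𝓝 1) := by
    simpa using ((tendsto_inv_atTop_zero.const_add 1).rpow_const (p := q) (by norm_num))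
  refine h.congr' ?_
  filter_upwards [eventually_gt_atTop 0] with lam hlam
  rw [← div_rpow (by linarith) hlam.le, add_div, div_self hlam.ne', one_div]

theorem tendsto_div_rpow_atTop_zero {q : ℝ} (hq : 1 < q) :
    Tendsto (fun lam : ℝ => lam / lam ^ q) atTop (𝓝 0) := by
  have h : Tendsto (fun lam : ℝ => lam ^ (-(q - 1))) atTop (𝓝 0) :=
    tendsto_rpow_neg_atTop (by linarith)
  refine h.congr' ?_
  filter_upwards [eventually_gt_atTop 0] with lam hlam
  rw [neg_sub, rpow_sub hlam, rpow_one]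

/-- logarithmic Laplace asymptotic:
lim_{λ→∞} ln I_m(λ) / (λ^{m'}/m') = 1, where I_m(λ) = ∫₀^∞ exp(λx − x^m/m) dx
and m' = m/(m−1). -/
theorem stmt11 (m : ℝ) (hm : 1 < m) :
    Tendsto
      (fun lam : ℝ =>
        Real.log (∫ x in Set.Ici (0 : ℝ), Real.exp (lam * x - x ^ m / m)) /
          (lam ^ (m / (m - 1)) / (m / (m - 1))))
      atTop (nhds 1) := by
  have hmq : m.HolderConjugate (m / (m - 1)) := .conjExponent hm
  set q := m / (m - 1)
  change Tendsto (fun lam => log (laplaceIntegral m lam) / (lam ^ q / q)) atTop (𝓝 1)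
  have hq : 0 < q := hmq.symm.pos
  have hlower : Tendsto (fun lam : ℝ => 1 - q * (lam / lam ^ q)) atTop (𝓝 1) := by
    simpa using ((tendsto_div_rpow_atTop_zero hmq.symm.lt).const_mul q).const_sub 1
  refine tendsto_of_tendsto_of_tendsto_of_le_of_le' hlower
    (tendsto_add_one_rpow_div_rpow_atTop q) ?_ ?_ <;>
    filter_upwards [eventually_ge_atTop 1] with lam hlam
  all_goals
    have hlog := hmq.log_laplaceIntegral_mem_Icc hlam
    have hpow : 0 < lam ^ q / q := by positivity
  · calc 1 - q * (lam / lam ^ q) = (lam ^ q / q - lam) / (lam ^ q / q) := by field_simp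
      _ ≤ _ := div_le_div_of_nonneg_right hlog.1 hpow.le
  · calc _ ≤ (lam + 1) ^ q / q / (lam ^ q / q) := div_le_div_of_nonneg_right hlog.2 hpow.le
      _ = (lam + 1) ^ q / lam ^ q := by field_simp
end

section
/- Let m > 1, r ∈ ℝ, m' = m/(m−1), and ζ_{m,r}(x) = m⁻¹ x^m (ln x)^r for x ≥ e. Then its Young–Fenchel transform satisfies the asymptotic equivalence ζ_{m,r}*(y) ~ (1/m') · (m−1)^{r/(m−1)} · y^{m'} · (ln y)^{−r/(m−1)} as y → ∞, i.e., the ratio of the two sides tends to 1. -/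
/-!
For the lower bound, evaluate `x * y - ζ x` at `x₀ = ((m-1)/log y)^(r/(m-1)) * y^(1/(m-1))`,
where `x₀^(m-1) (log x₀)^r / y → 1`. For the upper bound fix `l > 1` and split `x ≥ e` by the size
of `log x` against `v = log y / (m-1)`: if `log x ≤ v / l` then `x * y ≤ y^(1 + 1/(l(m-1)))`, which
is negligible because its exponent is below `m/(m-1)`; if `log x ≥ l v` then `ζ x ≥ x * y` since
`x^(m-1) (log x)^r` outgrows `y`; in between `(log x)^r ≥ l^(-|r|) v^r`, and Young's inequality
for the pure power `x^m` gives at most `l^(|r|/(m-1))` times the asymptotic value.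
-/

open Real Filter

noncomputable def zeta (m r x : ℝ) : ℝ := m⁻¹ * x ^ m * log x ^ r

noncomputable def zetaConj (m r y : ℝ) : ℝ :=
  sSup {t | ∃ x, exp 1 ≤ x ∧ t = x * y - zeta m r x}

noncomputable def zetaConjAsymp (m r y : ℝ) : ℝ :=
  1 / (m / (m - 1)) * (m - 1) ^ (r / (m - 1)) * y ^ (m / (m - 1)) * log y ^ (-(r / (m - 1)))

lemma zetaConjAsymp_pos {m : ℝ} (r : ℝ) (hm : 1 < m) {y : ℝ} (hy : 1 < y) :
    0 < zetaConjAsymp m r y := by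
  have := log_pos hy
  have : 0 < m - 1 := by linarith
  unfold zetaConjAsymp; positivity

lemma zetaConj_le {m r y B : ℝ} (h : ∀ x, exp 1 ≤ x → x * y - zeta m r x ≤ B) :
    zetaConj m r y ≤ B :=
  csSup_le ⟨_, exp 1, le_rfl, rfl⟩ (by rintro _ ⟨x, hx, rfl⟩; exact h x hx)

lemma le_zetaConj {m r y B : ℝ} (h : ∀ x, exp 1 ≤ x → x * y - zeta m r x ≤ B) {x : ℝ}
    (hx : exp 1 ≤ x) : x * y - zeta m r x ≤ zetaConj m r y :=
  le_csSup ⟨B, by rintro _ ⟨x, hx, rfl⟩; exact h x hx⟩ ⟨x, hx, rfl⟩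

lemma mul_le_add_young {m C x y : ℝ} (hm : 1 < m) (hC : 0 < C) (hx : 0 ≤ x) (hy : 0 ≤ y) :
    x * y ≤ C * x ^ m + 1 / (m / (m - 1)) * (m * C) ^ (-(m - 1)⁻¹) * y ^ (m / (m - 1)) := by
  have hm0 : 0 < m := by linarith
  have hmC : 0 < m * C := by positivity
  have young := young_inequality_of_nonneg (q := m / (m - 1))
    (mul_nonneg hx (rpow_nonneg hmC.le m⁻¹)) (mul_nonneg hy (rpow_nonneg hmC.le (-m⁻¹)))
    (.conjExponent hm)
  have hprod : x * (m * C) ^ m⁻¹ * (y * (m * C) ^ (-m⁻¹)) = x * y := by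
    rw [rpow_neg hmC.le]; field_simp
  have hfst : (x * (m * C) ^ m⁻¹) ^ m / m = C * x ^ m := by
    rw [mul_rpow hx (by positivity), ← rpow_mul hmC.le, inv_mul_cancel₀ hm0.ne', rpow_one]
    field_simp
  have hsnd : (y * (m * C) ^ (-m⁻¹)) ^ (m / (m - 1)) / (m / (m - 1))
      = 1 / (m / (m - 1)) * (m * C) ^ (-(m - 1)⁻¹) * y ^ (m / (m - 1)) := by
    have : -m⁻¹ * (m / (m - 1)) = -(m - 1)⁻¹ := by field_simp
    rw [mul_rpow hy (by positivity), ← rpow_mul hmC.le, this]; ring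
  rwa [hprod, hfst, hsnd] at young

lemma rpow_mul_rpow_le_rpow_of_mem_Icc {u v l : ℝ} (r : ℝ) (hv : 0 < v) (hl : 0 < l)
    (hlo : v / l ≤ u) (hhi : u ≤ l * v) : l ^ (-|r|) * v ^ r ≤ u ^ r := by
  rcases le_or_gt 0 r with hr | hr
  · calc l ^ (-|r|) * v ^ r = (v / l) ^ r := by
          rw [abs_of_nonneg hr, rpow_neg hl.le, div_rpow hv.le hl.le, inv_mul_eq_div]
      _ ≤ u ^ r := rpow_le_rpow (div_nonneg hv.le hl.le) hlo hr
  · calc l ^ (-|r|) * v ^ r = (l * v) ^ r := by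
          rw [abs_of_neg hr, neg_neg, mul_rpow hl.le hv.le]
      _ ≤ u ^ r := rpow_le_rpow_of_nonpos ((div_pos hv hl).trans_le hlo) hhi hr.le

lemma mul_sub_zeta_le_of_log_mem_Icc {m r l x y : ℝ} (hm : 1 < m) (hl : 0 < l) (hy : 1 < y)
    (hx : 0 < x) (hlo : log y / (m - 1) / l ≤ log x) (hhi : log x ≤ l * (log y / (m - 1))) :
    x * y - zeta m r x ≤ l ^ (|r| / (m - 1)) * zetaConjAsymp m r y := by
  have hc : 0 < m - 1 := by linarith
  have hL : 0 < log y := log_pos hy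
  set v := log y / (m - 1) with hv
  have hv0 : 0 < v := by positivity
  have hlog := rpow_mul_rpow_le_rpow_of_mem_Icc r hv0 hl hlo hhi
  have hzeta : m⁻¹ * (l ^ (-|r|) * v ^ r) * x ^ m ≤ zeta m r x := by
    unfold zeta
    rw [mul_right_comm]
    gcongr
  have young := mul_le_add_young hm (C := m⁻¹ * (l ^ (-|r|) * v ^ r)) (by positivity) hx.le
    (by linarith : 0 ≤ y)
  have hconst : (m * (m⁻¹ * (l ^ (-|r|) * v ^ r))) ^ (-(m - 1)⁻¹)
      = l ^ (|r| / (m - 1)) * ((m - 1) ^ (r / (m - 1)) * log y ^ (-(r / (m - 1)))) := by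
    rw [mul_inv_cancel_left₀ (by linarith), mul_rpow (by positivity) (by positivity),
      ← rpow_mul hl.le, ← rpow_mul hv0.le, hv, div_rpow hL.le hc.le,
      show -|r| * -(m - 1)⁻¹ = |r| / (m - 1) by ring, show r * -(m - 1)⁻¹ = -(r / (m - 1)) by ring,
      rpow_neg hc.le, div_inv_eq_mul]
    ring
  rw [hconst] at young
  unfold zetaConjAsymp
  linarith

lemma eventually_rpow_le_zetaConjAsymp {m e : ℝ} (r : ℝ) (hm : 1 < m) (he : e < m / (m - 1)) :
    ∀ᶠ y in atTop, y ^ e ≤ zetaConjAsymp m r y := by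
  have hc : 0 < m - 1 := by linarith
  have hconst : 0 < 1 / (m / (m - 1)) * (m - 1) ^ (r / (m - 1)) := by
    have : 0 < m := by linarith
    positivity
  filter_upwards [(isLittleO_log_rpow_rpow_atTop (r / (m - 1)) (sub_pos.2 he)).bound hconst,
    eventually_gt_atTop 1] with y hlog hy
  have hy0 : 0 < y := by linarith
  have hL : 0 < log y := log_pos hy
  rw [norm_of_nonneg (by positivity), norm_of_nonneg (by positivity)] at hlog
  calc y ^ e = y ^ e * log y ^ (r / (m - 1)) * log y ^ (-(r / (m - 1))) := by
        rw [rpow_neg hL.le, mul_assoc, mul_inv_cancel₀ (by positivity), mul_one]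
    _ ≤ y ^ e * (1 / (m / (m - 1)) * (m - 1) ^ (r / (m - 1)) * y ^ (m / (m - 1) - e))
          * log y ^ (-(r / (m - 1))) := by gcongr
    _ = zetaConjAsymp m r y := by
        rw [zetaConjAsymp, rpow_sub hy0]
        field_simp

lemma eventually_mul_le_zeta {m b : ℝ} (r : ℝ) (hb : 0 < b) (hbm : 1 < b * (m - 1)) :
    ∀ᶠ y in atTop, ∀ x, y ^ b ≤ x → x * y ≤ zeta m r x := by
  have hinv : 1 / b < m - 1 := by rw [div_lt_iff₀ hb]; linarith
  have hinv0 : 0 < 1 / b := by positivity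
  have hm : 0 < m := by linarith
  set p := (m - 1 + 1 / b) / 2 with hp
  have hp0 : 0 < p := by linarith
  have hpm : 0 < m - 1 - p := by linarith
  have hbp : 0 < b * p - 1 := by
    have : b * p = (b * (m - 1) + 1) / 2 := by rw [hp]; field_simp
    linarith
  obtain ⟨X, hX⟩ := eventually_atTop.mp
    (((isLittleO_log_rpow_rpow_atTop (-r) hpm).bound one_pos).and (eventually_gt_atTop 1))
  filter_upwards [(tendsto_rpow_atTop hb).eventually_ge_atTop X,
    (tendsto_rpow_atTop hbp).eventually_ge_atTop m, eventually_gt_atTop 0] with y hyX hym hy x hx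
  obtain ⟨hlog, hx1⟩ := hX x (hyX.trans hx)
  have hx0 : 0 < x := by linarith
  have hL : 0 < log x := log_pos hx1
  rw [one_mul, norm_of_nonneg (by positivity), norm_of_nonneg (by positivity)] at hlog
  have hgrowth : m * y ≤ x ^ (m - 1) * log x ^ r :=
    calc m * y ≤ y ^ (b * p - 1) * y := by gcongr
      _ = (y ^ b) ^ p := by rw [← rpow_mul hy.le, rpow_sub_one hy.ne']; field_simp
      _ ≤ x ^ p := by gcongr
      _ = x ^ (m - 1) * (x ^ (m - 1 - p))⁻¹ := by
        rw [← rpow_neg hx0.le, ← rpow_add hx0]; ring_nf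
      _ ≤ x ^ (m - 1) * (log x ^ (-r))⁻¹ := by gcongr
      _ = x ^ (m - 1) * log x ^ r := by rw [rpow_neg hL.le, inv_inv]
  calc x * y = m⁻¹ * x * (m * y) := by field_simp
    _ ≤ m⁻¹ * x * (x ^ (m - 1) * log x ^ r) := by gcongr
    _ = zeta m r x := by rw [zeta, rpow_sub_one hx0.ne']; field_simp

lemma eventually_mul_sub_zeta_le {m l : ℝ} (r : ℝ) (hm : 1 < m) (hl : 1 < l) :
    ∀ᶠ y in atTop, ∀ x, exp 1 ≤ x →
      x * y - zeta m r x ≤ l ^ (|r| / (m - 1)) * zetaConjAsymp m r y := by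
  have hc : 0 < m - 1 := by linarith
  set a := (m - 1)⁻¹ / l
  set b := l * (m - 1)⁻¹ with hb
  have hea : 1 + a < m / (m - 1) := by
    have : a < (m - 1)⁻¹ := div_lt_self (by positivity) hl
    rw [show m / (m - 1) = 1 + (m - 1)⁻¹ by field_simp; ring]
    linarith
  have hbm : 1 < b * (m - 1) := by rwa [hb, inv_mul_cancel_right₀ hc.ne']
  filter_upwards [eventually_gt_atTop 1, eventually_rpow_le_zetaConjAsymp r hm hea,
    eventually_mul_le_zeta r (by positivity) hbm] with y hy hsmall hlarge x hx
  have hy0 : 0 < y := by linarith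
  have hx0 : 0 < x := (exp_pos 1).trans_le hx
  have hlogx : 0 ≤ log x := log_nonneg (one_le_exp zero_le_one |>.trans hx)
  have hA := zetaConjAsymp_pos r hm hy
  have hK : 1 ≤ l ^ (|r| / (m - 1)) := one_le_rpow hl.le (by positivity)
  rcases le_or_gt x (y ^ a) with hxa | hxa
  · have : 0 ≤ zeta m r x := by unfold zeta; positivity
    calc x * y - zeta m r x ≤ y ^ a * y := by nlinarith
      _ = y ^ (1 + a) := by rw [rpow_add hy0, rpow_one, mul_comm]
      _ ≤ zetaConjAsymp m r y := hsmall
      _ ≤ l ^ (|r| / (m - 1)) * zetaConjAsymp m r y := le_mul_of_one_le_left hA.le hK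
  rcases le_or_gt (y ^ b) x with hxb | hxb
  · nlinarith [hlarge x hxb]
  · apply mul_sub_zeta_le_of_log_mem_Icc hm (by linarith) hy hx0
    · calc log y / (m - 1) / l = log (y ^ a) := by rw [log_rpow hy0]; ring
        _ ≤ log x := log_le_log (by positivity) hxa.le
    · calc log x ≤ log (y ^ b) := log_le_log hx0 hxb.le
        _ = l * (log y / (m - 1)) := by rw [log_rpow hy0]; ring

noncomputable def zetaNearMaximizer (m r y : ℝ) : ℝ :=
  ((m - 1) / log y) ^ (r / (m - 1)) * y ^ (m - 1)⁻¹

lemma zetaNearMaximizer_pos {m : ℝ} (r : ℝ) (hm : 1 < m) {y : ℝ} (hy : 1 < y) :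
    0 < zetaNearMaximizer m r y := by
  have := log_pos hy
  have : 0 < m - 1 := by linarith
  unfold zetaNearMaximizer; positivity

lemma sub_one_mul_log_zetaNearMaximizer {m : ℝ} (r : ℝ) (hm : 1 < m) {y : ℝ} (hy : 1 < y) :
    (m - 1) * log (zetaNearMaximizer m r y) = log y + r * (log (m - 1) - log (log y)) := by
  have hc : 0 < m - 1 := by linarith
  have hL : 0 < log y := log_pos hy
  rw [zetaNearMaximizer, log_mul (by positivity) (by positivity), log_rpow (by positivity),
    log_rpow (by linarith), log_div hc.ne' hL.ne']
  field_simp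
  ring

lemma tendsto_sub_one_mul_log_zetaNearMaximizer_div {m : ℝ} (r : ℝ) (hm : 1 < m) :
    Tendsto (fun y => (m - 1) * log (zetaNearMaximizer m r y) / log y) atTop (nhds 1) := by
  have hconst : Tendsto (fun y => log (m - 1) / log y) atTop (nhds 0) :=
    tendsto_const_nhds.div_atTop tendsto_log_atTop
  have hloglog : Tendsto (fun y => log (log y) / log y) atTop (nhds 0) :=
    isLittleO_log_id_atTop.tendsto_div_nhds_zero.comp tendsto_log_atTop
  have := ((hconst.sub hloglog).const_mul r).const_add 1
  rw [sub_zero, mul_zero, add_zero] at this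
  refine this.congr' ?_
  filter_upwards [eventually_gt_atTop 1] with y hy
  have := log_pos hy
  rw [sub_one_mul_log_zetaNearMaximizer r hm hy]
  field_simp

lemma eventually_exp_one_le_zetaNearMaximizer {m : ℝ} (r : ℝ) (hm : 1 < m) :
    ∀ᶠ y in atTop, exp 1 ≤ zetaNearMaximizer m r y := by
  have hc : 0 < m - 1 := by linarith
  have hlog : Tendsto (fun y => (m - 1) * log (zetaNearMaximizer m r y) / log y * (log y / (m - 1)))
      atTop atTop :=
    (tendsto_sub_one_mul_log_zetaNearMaximizer_div r hm).pos_mul_atTop one_pos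
      (tendsto_log_atTop.atTop_div_const hc)
  filter_upwards [hlog.eventually_ge_atTop 1, eventually_gt_atTop 1] with y h1 hy
  have := log_pos hy
  rw [show (m - 1) * log (zetaNearMaximizer m r y) / log y * (log y / (m - 1))
    = log (zetaNearMaximizer m r y) by field_simp] at h1
  exact (le_log_iff_exp_le (zetaNearMaximizer_pos r hm hy)).1 h1

lemma zetaNearMaximizer_mul {m : ℝ} (r : ℝ) (hm : 1 < m) {y : ℝ} (hy : 1 < y) :
    zetaNearMaximizer m r y * y = m / (m - 1) * zetaConjAsymp m r y := by
  have hc : 0 < m - 1 := by linarith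
  have hL : 0 < log y := log_pos hy
  have hexp : y ^ (m - 1)⁻¹ * y = y ^ (m / (m - 1)) := by
    rw [← rpow_add_one (by linarith), show (m - 1)⁻¹ + 1 = m / (m - 1) by field_simp; ring]
  rw [zetaNearMaximizer, zetaConjAsymp, mul_assoc, hexp, div_rpow hc.le hL.le, rpow_neg hL.le]
  field_simp

lemma zeta_zetaNearMaximizer {m : ℝ} (r : ℝ) (hm : 1 < m) {y : ℝ} (hy : 1 < y)
    (hx : 1 ≤ zetaNearMaximizer m r y) :
    zeta m r (zetaNearMaximizer m r y) = m⁻¹ * (zetaNearMaximizer m r y * y) *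
      ((m - 1) * log (zetaNearMaximizer m r y) / log y) ^ r := by
  have hc : 0 < m - 1 := by linarith
  have hL : 0 < log y := log_pos hy
  set x := zetaNearMaximizer m r y with hx_def
  have hx0 : 0 < x := zetaNearMaximizer_pos r hm hy
  have hpow : x ^ (m - 1) = ((m - 1) / log y) ^ r * y := by
    rw [hx_def, zetaNearMaximizer, mul_rpow (by positivity) (by positivity),
      ← rpow_mul (by positivity), ← rpow_mul (by linarith), div_mul_cancel₀ _ hc.ne',
      inv_mul_cancel₀ hc.ne', rpow_one]
  have hsplit : x ^ m = x * x ^ (m - 1) := by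
    rw [rpow_sub_one hx0.ne']; field_simp
  rw [zeta, hsplit, hpow, show (m - 1) * log x / log y = log x * ((m - 1) / log y) by ring,
    mul_rpow (log_nonneg hx) (by positivity)]
  ring

lemma tendsto_mul_sub_zeta_zetaNearMaximizer_div {m : ℝ} (r : ℝ) (hm : 1 < m) :
    Tendsto (fun y => (zetaNearMaximizer m r y * y - zeta m r (zetaNearMaximizer m r y)) /
      zetaConjAsymp m r y) atTop (nhds 1) := by
  have hc : 0 < m - 1 := by linarith
  have hu := (tendsto_sub_one_mul_log_zetaNearMaximizer_div r hm).rpow_const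
    (p := r) (.inl one_ne_zero)
  have := ((hu.const_mul m⁻¹).const_sub 1).const_mul (m / (m - 1))
  rw [one_rpow, show m / (m - 1) * (1 - m⁻¹ * 1) = 1 by field_simp] at this
  refine this.congr' ?_
  filter_upwards [eventually_gt_atTop 1, eventually_exp_one_le_zetaNearMaximizer r hm]
    with y hy hx
  have hA := (zetaConjAsymp_pos r hm hy).ne'
  rw [zeta_zetaNearMaximizer r hm hy ((one_le_exp zero_le_one).trans hx),
    zetaNearMaximizer_mul r hm hy]
  field_simp

/-- for m > 1, r ∈ ℝ, m' = m/(m−1) and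
ζ_{m,r}(x) = m⁻¹ x^m (ln x)^r on [e,∞), the Young–Fenchel transform satisfies
ζ_{m,r}*(y) ~ (1/m')·(m−1)^{r/(m−1)}·y^{m'}·(ln y)^{−r/(m−1)} as y → ∞. -/
theorem stmt19 (m r : ℝ) (hm : 1 < m) :
    Tendsto
      (fun y : ℝ =>
        sSup {t : ℝ | ∃ x : ℝ, Real.exp 1 ≤ x ∧
            t = x * y - m⁻¹ * x ^ m * (Real.log x) ^ r} /
          ((1 / (m / (m - 1))) * (m - 1) ^ (r / (m - 1)) * y ^ (m / (m - 1)) *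
            (Real.log y) ^ (-(r / (m - 1)))))
      atTop (nhds 1) := by
  change Tendsto (fun y => zetaConj m r y / zetaConjAsymp m r y) atTop (nhds 1)
  have hc : 0 < m - 1 := by linarith
  refine tendsto_order.2 ⟨fun a ha => ?_, fun b hb => ?_⟩
  · filter_upwards [(tendsto_mul_sub_zeta_zetaNearMaximizer_div r hm).eventually_const_lt ha,
      eventually_mul_sub_zeta_le r hm one_lt_two, eventually_exp_one_le_zetaNearMaximizer r hm,
      eventually_gt_atTop 1] with y hlow hup hx hy
    exact hlow.trans_le (by gcongr; exacts [(zetaConjAsymp_pos r hm hy).le, le_zetaConj hup hx])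
  · have hl : 1 < b ^ ((m - 1) / (|r| + 1)) := one_lt_rpow hb (by positivity)
    have hK : (b ^ ((m - 1) / (|r| + 1))) ^ (|r| / (m - 1)) < b := by
      rw [← rpow_mul (by linarith)]
      refine rpow_lt_self_of_one_lt hb ?_
      rw [div_mul_div_comm, mul_comm, div_lt_one (by positivity)]
      linarith
    filter_upwards [eventually_mul_sub_zeta_le r hm hl, eventually_gt_atTop 1] with y hup hy
    have hA := zetaConjAsymp_pos r hm hy
    exact lt_of_le_of_lt ((div_le_iff₀ hA).2 (zetaConj_le hup)) hK
end
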